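/- arXiv:1512.07887 — 2 statements merged into one kernel-verified Lean document; each statement's English description precedes it below -/
import Mathlib

section
/- Let (Ω, ℱ, P) be a probability space, T, M, C₁ > 0, and let Y : [0,T] × Ω → ℝ^d, Σ : [0,T] × Ω → ℝ, b : [0,T] × Ω → ℝ^d be measurable processes such that t ↦ E‖Y(t)‖² is finite and measurable and: (i) for all 0 ≤ s ≤ t ≤ T, E‖Y(t)‖² = E‖Y(s)‖² + ∫ₛᵗ E[Σ(τ) + 2⟨b(τ), Y(τ)⟩] dτ; (ii) for almost every (τ, ω), |Σ(τ,ω)| ≤ M(1 + ‖Y(τ,ω)‖² + C₁) and ‖b(τ,ω)‖ ≤ M(1 + ‖Y(τ,ω)‖ + C₁^{1/2}). Then there exists a constant C₃ depending only on M, T, C₁ such that for all 0 ≤ s ≤ t ≤ T, E‖Y(t)‖² ≤ C₃(1 + E‖Y(s)‖²). -/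
/-!
Write `m(t) = E‖Y(t)‖²`. Pointwise, (ii) bounds `|Σ + 2⟪b, Y⟫|` by `K (1 + ‖Y‖²)` with
`K = M (2 C₁ + 5)`, so by (i) the function `u = 1 + m` satisfies `u(t) ≤ u(s) + ∫ₛᵗ K u`, and
Grönwall's inequality gives `u(t) ≤ e^{K T} u(s)`. Grönwall is proved by comparing `u` with the
solution `u(s) e^{K (t - s)}` of the equality case and iterating the integral inequality for the
difference.
-/

open MeasureTheory Set Real
open scoped RealInnerProductSpace

section Gronwall

open intervalIntegral
open scoped Nat

theorem intervalIntegrable_of_integrableOn_Icc {f : ℝ → ℝ} {a b r : ℝ}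
    (hf : IntegrableOn f (Icc a b)) (hr : r ∈ Icc a b) : IntervalIntegrable f volume a r :=
  (intervalIntegrable_iff_integrableOn_Icc_of_le hr.1).2 (hf.mono_set (Icc_subset_Icc_right hr.2))

theorem integral_mul_exp_mul_sub (K c a r : ℝ) :
    ∫ τ in a..r, K * (c * exp (K * (τ - a))) = c * exp (K * (r - a)) - c := by
  have hderiv (τ : ℝ) : HasDerivAt (fun τ => c * exp (K * (τ - a)))
      (K * (c * exp (K * (τ - a)))) τ :=
    ((((hasDerivAt_id τ).sub_const a).const_mul K).exp.const_mul c).congr_deriv (by simp; ring)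
  rw [integral_eq_sub_of_hasDerivAt (fun τ _ => hderiv τ) (Continuous.intervalIntegrable
    (by fun_prop) _ _), sub_self, mul_zero, exp_zero, mul_one]

theorem integral_mul_pow_div_factorial (K W a r : ℝ) (n : ℕ) :
    ∫ τ in a..r, K * (W * (K * (τ - a)) ^ n / n !) = W * (K * (r - a)) ^ (n + 1) / (n + 1)! := by
  have hderiv (τ : ℝ) : HasDerivAt (fun τ => W * (K * (τ - a)) ^ (n + 1) / (n + 1)!)
      (K * (W * (K * (τ - a)) ^ n / n !)) τ :=
    (((((hasDerivAt_id τ).sub_const a).const_mul K).pow (n + 1)).const_mul W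
      |>.div_const ((n + 1)! : ℝ)).congr_deriv (by
        rw [Nat.factorial_succ]; push_cast; field_simp; simp)
  rw [integral_eq_sub_of_hasDerivAt (fun τ _ => hderiv τ) (Continuous.intervalIntegrable
    (by fun_prop) _ _)]
  simp

/-- The inequality first gives `w ≤ W := ∫ₐᵇ K |w|`; iterating it then gives
`w r ≤ W (K (r - a))ⁿ / n!` for every `n`. -/
theorem nonpos_of_le_integral {w : ℝ → ℝ} {a b K : ℝ} (hK : 0 ≤ K)
    (hw : IntegrableOn w (Icc a b)) (h : ∀ r ∈ Icc a b, w r ≤ ∫ τ in a..r, K * w τ) :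
    ∀ r ∈ Icc a b, w r ≤ 0 := by
  set W := ∫ τ in a..b, K * |w τ|
  have hW : ∀ r ∈ Icc a b, w r ≤ W := fun r hr => calc
    w r ≤ ∫ τ in a..r, K * w τ := h r hr
    _ ≤ ∫ τ in a..r, K * |w τ| :=
      integral_mono_on hr.1 ((intervalIntegrable_of_integrableOn_Icc hw hr).const_mul K)
        ((intervalIntegrable_of_integrableOn_Icc hw hr).abs.const_mul K)
        fun τ _ => mul_le_mul_of_nonneg_left (le_abs_self _) hK
    _ ≤ W := integral_mono_interval le_rfl hr.1 hr.2
        (Filter.Eventually.of_forall fun τ => by positivity)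
        ((intervalIntegrable_of_integrableOn_Icc hw ⟨hr.1.trans hr.2, le_rfl⟩).abs.const_mul K)
  have hiter (n : ℕ) : ∀ r ∈ Icc a b, w r ≤ W * (K * (r - a)) ^ n / n ! := by
    induction n with
    | zero => simpa using hW
    | succ n ih =>
      intro r hr
      calc w r ≤ ∫ τ in a..r, K * w τ := h r hr
        _ ≤ ∫ τ in a..r, K * (W * (K * (τ - a)) ^ n / n !) :=
          integral_mono_on hr.1 ((intervalIntegrable_of_integrableOn_Icc hw hr).const_mul K)
            (Continuous.intervalIntegrable (by fun_prop) _ _) fun τ hτ =>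
              mul_le_mul_of_nonneg_left (ih τ ⟨hτ.1, hτ.2.trans hr.2⟩) hK
        _ = W * (K * (r - a)) ^ (n + 1) / (n + 1)! := integral_mul_pow_div_factorial K W a r n
  intro r hr
  have hlim := (FloorSemiring.tendsto_pow_div_factorial_atTop (K * (r - a))).const_mul W
  rw [mul_zero] at hlim
  exact ge_of_tendsto' hlim fun n => (hiter n r hr).trans_eq (mul_div_assoc _ _ _)

theorem le_mul_exp_of_le_add_integral {u : ℝ → ℝ} {a b c K : ℝ} (hK : 0 ≤ K)
    (hu : IntegrableOn u (Icc a b)) (h : ∀ r ∈ Icc a b, u r ≤ c + ∫ τ in a..r, K * u τ) :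
    ∀ r ∈ Icc a b, u r ≤ c * exp (K * (r - a)) := by
  set sol : ℝ → ℝ := fun τ => c * exp (K * (τ - a))
  have hsol : Continuous sol := by fun_prop
  suffices ∀ r ∈ Icc a b, u r - sol r ≤ 0 from fun r hr => sub_nonpos.1 (this r hr)
  refine nonpos_of_le_integral hK (hu.sub hsol.integrableOn_Icc) fun r hr => ?_
  have hsplit : ∫ τ in a..r, K * (u τ - sol τ)
      = (∫ τ in a..r, K * u τ) - (c * exp (K * (r - a)) - c) := by
    rw [← integral_mul_exp_mul_sub, ← integral_sub
      ((intervalIntegrable_of_integrableOn_Icc hu hr).const_mul K)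
      (Continuous.intervalIntegrable (by fun_prop) _ _)]
    simp only [sol, mul_sub]
  rw [hsplit]
  linarith [h r hr]

theorem le_mul_exp_of_eq_add_integral {u g : ℝ → ℝ} {s t K : ℝ} (hK : 0 ≤ K) (hst : s ≤ t)
    (hu₀ : 0 ≤ u s) (hu : ∀ r ∈ Icc s t, u r = u s + ∫ τ in s..r, g τ)
    (hg : ∀ᵐ τ ∂volume.restrict (Icc s t), |g τ| ≤ K * u τ) :
    u t ≤ u s * exp (K * (t - s)) := by
  by_cases hgi : IntervalIntegrable g volume s t
  · rw [intervalIntegrable_iff_integrableOn_Icc_of_le hst] at hgi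
    have hcont : ContinuousOn u (Icc s t) := by
      have := continuousOn_primitive_interval (uIcc_of_le hst ▸ hgi)
      rw [uIcc_of_le hst] at this
      exact (continuousOn_const.add this).congr hu
    have hui := hcont.integrableOn_Icc (μ := volume)
    refine le_mul_exp_of_le_add_integral hK hui (fun r hr => ?_) t ⟨hst, le_rfl⟩
    rw [hu r hr]
    gcongr
    exact integral_mono_ae_restrict hr.1 (intervalIntegrable_of_integrableOn_Icc hgi hr)
      ((intervalIntegrable_of_integrableOn_Icc hui hr).const_mul K)
      ((ae_restrict_of_ae_restrict_of_subset (Icc_subset_Icc_right hr.2) hg).mono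
        fun τ hτ => (le_abs_self _).trans hτ)
  · -- the interval integral of a non-integrable function is `0`, so `u` does not move
    have hut : u t = u s := by simpa [integral_undef hgi] using hu t ⟨hst, le_rfl⟩
    rw [hut]
    exact le_mul_of_one_le_right hu₀ (one_le_exp (mul_nonneg hK (sub_nonneg.2 hst)))

end Gronwall

theorem abs_add_two_inner_le {E : Type*} [NormedAddCommGroup E] [InnerProductSpace ℝ E]
    {M C S : ℝ} {x y : E} (hM : 0 ≤ M) (hC : 0 ≤ C) (hS : |S| ≤ M * (1 + ‖y‖ ^ 2 + C))
    (hx : ‖x‖ ≤ M * (1 + ‖y‖ + √C)) :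
    |S + 2 * ⟪x, y⟫| ≤ M * (2 * C + 5) * (1 + ‖y‖ ^ 2) := by
  have hinner : |⟪x, y⟫| ≤ M * (1 + ‖y‖ + √C) * ‖y‖ :=
    (abs_real_inner_le_norm x y).trans (mul_le_mul_of_nonneg_right hx (norm_nonneg y))
  have hsum : |S + 2 * ⟪x, y⟫| ≤ |S| + 2 * |⟪x, y⟫| := by
    simpa [abs_mul] using abs_add_le S (2 * ⟪x, y⟫)
  have hy : 2 * ‖y‖ ≤ 1 + ‖y‖ ^ 2 := by nlinarith [sq_nonneg (‖y‖ - 1)]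
  have hCy : 2 * √C * ‖y‖ ≤ C + ‖y‖ ^ 2 := by
    nlinarith [sq_nonneg (√C - ‖y‖), Real.sq_sqrt hC]
  nlinarith [mul_le_mul_of_nonneg_left hy hM, mul_le_mul_of_nonneg_left hCy hM,
    mul_nonneg (mul_nonneg hM hC) (sq_nonneg ‖y‖)]

theorem abs_integral_le_mul_one_add_integral {Ω : Type*} [MeasurableSpace Ω] {P : Measure Ω}
    [IsProbabilityMeasure P] {F G : Ω → ℝ} {K : ℝ} (hG : Integrable G P)
    (h : ∀ᵐ ω ∂P, |F ω| ≤ K * (1 + G ω)) :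
    |∫ ω, F ω ∂P| ≤ K * (1 + ∫ ω, G ω ∂P) := by
  have := norm_integral_le_of_norm_le (g := fun ω => K * (1 + G ω))
    (((integrable_const 1).add hG).const_mul K)
    (h.mono fun ω hω => (Real.norm_eq_abs (F ω)).trans_le hω)
  rwa [Real.norm_eq_abs, integral_const_mul, integral_add (integrable_const 1) hG,
    integral_const, probReal_univ, one_smul] at this

theorem stmt_4_general (d : ℕ) (T M C₁ : ℝ) (hM : 0 < M) (hC₁ : 0 < C₁) :
    ∃ C₃ : ℝ, ∀ (Ω : Type) [MeasurableSpace Ω] (P : Measure Ω)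
      [IsProbabilityMeasure P]
      (Y : ℝ → Ω → EuclideanSpace ℝ (Fin d)) (Sig : ℝ → Ω → ℝ)
      (b : ℝ → Ω → EuclideanSpace ℝ (Fin d)),
      Measurable (Function.uncurry Y) → Measurable (Function.uncurry Sig) →
      Measurable (Function.uncurry b) →
      (∀ t ∈ Set.Icc (0:ℝ) T, Integrable (fun ω => ‖Y t ω‖ ^ 2) P) →
      (Measurable fun t => ∫ ω, ‖Y t ω‖ ^ 2 ∂P) →
      (∀ s t : ℝ, 0 ≤ s → s ≤ t → t ≤ T →
        ∫ ω, ‖Y t ω‖ ^ 2 ∂P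
          = (∫ ω, ‖Y s ω‖ ^ 2 ∂P)
            + ∫ τ in s..t, (∫ ω, (Sig τ ω + 2 * ⟪b τ ω, Y τ ω⟫) ∂P)) →
      (∀ᵐ p ∂((volume.restrict (Set.Icc (0:ℝ) T)).prod P),
        |Sig p.1 p.2| ≤ M * (1 + ‖Y p.1 p.2‖ ^ 2 + C₁) ∧
        ‖b p.1 p.2‖ ≤ M * (1 + ‖Y p.1 p.2‖ + Real.sqrt C₁)) →
      ∀ s t : ℝ, 0 ≤ s → s ≤ t → t ≤ T →
        ∫ ω, ‖Y t ω‖ ^ 2 ∂P ≤ C₃ * (1 + ∫ ω, ‖Y s ω‖ ^ 2 ∂P) := by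
  set K := M * (2 * C₁ + 5)
  have hK : 0 ≤ K := by positivity
  refine ⟨exp (K * T), fun Ω _ P _ Y Sig b _ _ _ hYint _ hident hbound s t hs hst htT => ?_⟩
  have hdrift : ∀ᵐ τ ∂volume.restrict (Icc s t),
      |∫ ω, (Sig τ ω + 2 * ⟪b τ ω, Y τ ω⟫) ∂P| ≤ K * (1 + ∫ ω, ‖Y τ ω‖ ^ 2 ∂P) := by
    refine ae_restrict_of_ae_restrict_of_subset (Icc_subset_Icc hs htT) ?_
    filter_upwards [Measure.ae_ae_of_ae_prod hbound, ae_restrict_mem measurableSet_Icc]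
      with τ hτ hmem
    exact abs_integral_le_mul_one_add_integral (hYint τ hmem)
      (hτ.mono fun ω hω => abs_add_two_inner_le hM.le hC₁.le hω.1 hω.2)
  have hgronwall := le_mul_exp_of_eq_add_integral (u := fun r => 1 + ∫ ω, ‖Y r ω‖ ^ 2 ∂P) hK hst
    (by positivity) (fun r hr => by rw [hident s r hs hr.1 (hr.2.trans htT)]; ring) hdrift
  calc ∫ ω, ‖Y t ω‖ ^ 2 ∂P
      ≤ (1 + ∫ ω, ‖Y s ω‖ ^ 2 ∂P) * exp (K * (t - s)) := by linarith
    _ ≤ (1 + ∫ ω, ‖Y s ω‖ ^ 2 ∂P) * exp (K * T) := by gcongr; linarith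
    _ = exp (K * T) * (1 + ∫ ω, ‖Y s ω‖ ^ 2 ∂P) := mul_comm _ _

/-- Lemma 3 of the paper: conditional second-moment bound for an
admissible process.  There is a constant `C₃` depending only on `M, T, C₁` such that for
any process `Y` whose second moment satisfies the martingale identity (i) with
coefficients bounded as in (ii), one has `E‖Y(t)‖² ≤ C₃(1 + E‖Y(s)‖²)` for
`0 ≤ s ≤ t ≤ T`. -/
theorem stmt_4 (d : ℕ) (T M C₁ : ℝ) (hT : 0 < T) (hM : 0 < M) (hC₁ : 0 < C₁) :
    ∃ C₃ : ℝ, ∀ (Ω : Type) [MeasurableSpace Ω] (P : Measure Ω)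
      [IsProbabilityMeasure P]
      (Y : ℝ → Ω → EuclideanSpace ℝ (Fin d)) (Sig : ℝ → Ω → ℝ)
      (b : ℝ → Ω → EuclideanSpace ℝ (Fin d)),
      Measurable (Function.uncurry Y) → Measurable (Function.uncurry Sig) →
      Measurable (Function.uncurry b) →
      (∀ t ∈ Set.Icc (0:ℝ) T, Integrable (fun ω => ‖Y t ω‖ ^ 2) P) →
      (Measurable fun t => ∫ ω, ‖Y t ω‖ ^ 2 ∂P) →
      (∀ s t : ℝ, 0 ≤ s → s ≤ t → t ≤ T →
        ∫ ω, ‖Y t ω‖ ^ 2 ∂P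
          = (∫ ω, ‖Y s ω‖ ^ 2 ∂P)
            + ∫ τ in s..t, (∫ ω, (Sig τ ω + 2 * ⟪b τ ω, Y τ ω⟫) ∂P)) →
      (∀ᵐ p ∂((volume.restrict (Set.Icc (0:ℝ) T)).prod P),
        |Sig p.1 p.2| ≤ M * (1 + ‖Y p.1 p.2‖ ^ 2 + C₁) ∧
        ‖b p.1 p.2‖ ≤ M * (1 + ‖Y p.1 p.2‖ + Real.sqrt C₁)) →
      ∀ s t : ℝ, 0 ≤ s → s ≤ t → t ≤ T →
        ∫ ω, ‖Y t ω‖ ^ 2 ∂P ≤ C₃ * (1 + ∫ ω, ‖Y s ω‖ ^ 2 ∂P) :=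
  stmt_4_general d T M C₁ hM hC₁
end

section
/- Let T, K, M, R, C₂ > 0, D ≥ 0, and let κ : [0,∞) → [0,∞) be increasing. Let (P, dist) be a metric space with ς : P → [0,∞), let U be a set, and let f : [0,T] × ℝ^d × P × U → ℝ^d, g : [0,T] × ℝ^d × P × U → ℝ, σ : ℝ^d × P → ℝ satisfy: (A3) ‖f(t,x',p',u) − f(t,x'',p'',u)‖ ≤ K(‖x' − x''‖ + dist(p',p'')); (A4) ‖f(t,x,p,u)‖ ≤ M(1 + ‖x‖ + ς(p)) and |g(t,x,p,u)| ≤ M(1 + ‖x‖ + κ(ς(p))); (A5) |σ(x',p') − σ(x'',p'')| ≤ R(‖x' − x''‖ + dist(p',p''))(1 + ‖x'‖ + ‖x''‖ + κ(ς(p')) + κ(ς(p''))) and the same Lipschitz-with-growth bound for g(t,·,·,u). Let μ₁, μ₂ : [0,T] → P be flows with ς(μᵢ[t])² ≤ C₂ for all t and dist(μ₁[t], μ₂[t]) ≤ D for all t. For a measurable control v : [0,T] → U and (s,ξ) ∈ [0,T] × ℝ^d, let x[·, μᵢ, s, ξ, v] denote the solution of ẋ(t) = f(t, x(t), μᵢ[t],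 v(t)), x(s) = ξ, and z[T, μᵢ, s, ξ, v] = ∫ₛᵀ g(τ, x[τ, μᵢ, s, ξ, v], μᵢ[τ], v(τ)) dτ, and define V(s, ξ; μᵢ) = sup over measurable controls v of [σ(x[T, μᵢ, s, ξ, v], μᵢ[T]) + z[T, μᵢ, s, ξ, v]]. Then there exists a constant c depending only on K, M, R, T, κ, C₂ such that for every (s,ξ), |V(s, ξ; μ₁) − V(s, ξ; μ₂)| ≤ c (1 + ‖ξ‖) D. -/
/-!
Fix a measurable control `v`. By Grönwall's inequality the trajectories driven by `v` are bounded
linearly in `‖ξ‖`, and the trajectories for the two flows `μ₁, μ₂` stay within `K T e^{KT} D` of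
each other. The growth-Lipschitz bounds on `σ` and `g` then give a payoff difference of order
`(1 + ‖ξ‖) D`, uniformly in `v`; since the same controls are admissible for both flows, the
suprema differ by at most the same amount.
-/

open MeasureTheory Set Real

theorem le_mul_exp_of_le_add_mul_integral {φ : ℝ → ℝ} {a b s T : ℝ} (hb : 0 ≤ b)
    (hφ : ContinuousOn φ (Icc s T)) (h : ∀ t ∈ Icc s T, φ t ≤ a + b * ∫ τ in s..t, φ τ) :
    ∀ t ∈ Icc s T, φ t ≤ a * exp (b * (t - s)) := by
  intro t ht
  have hsT : s ≤ T := ht.1.trans ht.2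
  -- extending `φ` continuously to `ℝ` makes its primitive differentiable everywhere
  set ψ : ℝ → ℝ := fun τ => φ (projIcc s T hsT τ)
  have hψ : Continuous ψ := hφ.comp_continuous (continuous_subtype_val.comp continuous_projIcc)
    fun τ => (projIcc s T hsT τ).2
  have hψφ : ∀ τ ∈ Icc s T, ∫ r in s..τ, ψ r = ∫ r in s..τ, φ r := fun τ hτ =>
    intervalIntegral.integral_congr fun r hr => by
      rw [uIcc_of_le hτ.1] at hr
      simp [ψ, projIcc_of_mem hsT ⟨hr.1, hr.2.trans hτ.2⟩]
  set χ : ℝ → ℝ := fun τ => a + b * ∫ r in s..τ, ψ r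
  have hχ' : ∀ τ, HasDerivAt χ (b * ψ τ) τ := fun τ =>
    ((hψ.integral_hasStrictDerivAt s τ).hasDerivAt.const_mul b).const_add a
  have hχ : ∀ τ ∈ Icc s T, χ τ ≤ gronwallBound a b 0 (τ - s) :=
    le_gronwallBound_of_liminf_deriv_right_le (fun τ _ => (hχ' τ).continuousAt.continuousWithinAt)
      (fun τ _ _ hr => (hχ' τ).hasDerivWithinAt.liminf_right_slope_le hr) (by simp [χ])
      fun τ hτ => by
        have hτ' : τ ∈ Icc s T := Ico_subset_Icc_self hτ
        have := h τ hτ'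
        simp only [χ, hψφ τ hτ', ψ, projIcc_of_mem hsT hτ', add_zero]
        gcongr
  calc φ t ≤ χ t := by simpa only [χ, hψφ t ht] using h t ht
    _ ≤ a * exp (b * (t - s)) := (hχ t ht).trans_eq (gronwallBound_ε0 a b _)

theorem norm_le_of_eq_add_integral {E : Type*} [NormedAddCommGroup E] [NormedSpace ℝ E]
    {F x : ℝ → E} {ξ : E} {s T b C : ℝ} (hb : 0 ≤ b) (hC : 0 ≤ C)
    (hF : IntervalIntegrable F volume s T) (hx : ∀ t ∈ Icc s T, x t = ξ + ∫ τ in s..t, F τ)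
    (hFx : ∀ τ ∈ Icc s T, ‖F τ‖ ≤ b * ‖x τ‖ + C) :
    ∀ t ∈ Icc s T, ‖x t‖ ≤ (‖ξ‖ + C * (T - s)) * exp (b * (t - s)) := by
  intro t ht
  have hsT : s ≤ T := ht.1.trans ht.2
  have hxc : ContinuousOn x (Icc s T) := by
    have := continuousOn_const (c := ξ).add
      (intervalIntegral.continuousOn_primitive_interval' hF left_mem_uIcc)
    exact (uIcc_of_le hsT ▸ this).congr hx
  refine le_mul_exp_of_le_add_mul_integral hb hxc.norm (fun u hu => ?_) t ht
  have hsub : Icc s u ⊆ Icc s T := Icc_subset_Icc_right hu.2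
  have hxi : IntervalIntegrable (fun τ => ‖x τ‖) volume s u :=
    ((hxc.mono hsub).norm).intervalIntegrable_of_Icc hu.1
  calc ‖x u‖ ≤ ‖ξ‖ + ∫ τ in s..u, ‖F τ‖ := by
        rw [hx u hu]
        exact (norm_add_le _ _).trans
          (add_le_add_right (intervalIntegral.norm_integral_le_integral_norm hu.1) _)
    _ ≤ ‖ξ‖ + ∫ τ in s..u, (b * ‖x τ‖ + C) := by
        gcongr
        exact intervalIntegral.integral_mono_on hu.1
          (hF.mono_set (uIcc_subset_uIcc_left (uIcc_of_le hsT ▸ hu))).norm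
          ((hxi.const_mul b).add intervalIntegrable_const) fun τ hτ => hFx τ (hsub hτ)
    _ = ‖ξ‖ + C * (u - s) + b * ∫ τ in s..u, ‖x τ‖ := by
        rw [intervalIntegral.integral_add (hxi.const_mul b) intervalIntegrable_const,
          intervalIntegral.integral_const_mul, intervalIntegral.integral_const, smul_eq_mul]
        ring
    _ ≤ ‖ξ‖ + C * (T - s) + b * ∫ τ in s..u, ‖x τ‖ := by gcongr; exact hu.2

theorem BddAbove.of_forall_exists_le_add {A B : Set ℝ} {ε : ℝ} (hB : BddAbove B)
    (h : ∀ a ∈ A, ∃ b ∈ B, a ≤ b + ε) : BddAbove A := by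
  obtain ⟨m, hm⟩ := hB
  refine ⟨m + ε, fun a ha => ?_⟩
  obtain ⟨b, hb, hab⟩ := h a ha
  linarith [hm hb]

theorem csSup_le_csSup_add {A B : Set ℝ} {ε : ℝ} (hA : A.Nonempty) (hB : BddAbove B)
    (h : ∀ a ∈ A, ∃ b ∈ B, a ≤ b + ε) : sSup A ≤ sSup B + ε :=
  csSup_le hA fun a ha => by
    obtain ⟨b, hb, hab⟩ := h a ha
    linarith [le_csSup hB hb]

/-- Unbounded sets have junk supremum `0` in `ℝ`; the hypotheses make `A` and `B` bounded (and
empty) simultaneously. -/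
theorem abs_sSup_sub_sSup_le_of_forall_exists_le_add {A B : Set ℝ} {ε : ℝ} (hε : 0 ≤ ε)
    (hAB : ∀ a ∈ A, ∃ b ∈ B, a ≤ b + ε) (hBA : ∀ b ∈ B, ∃ a ∈ A, b ≤ a + ε) :
    |sSup A - sSup B| ≤ ε := by
  by_cases hA : BddAbove A
  · have hB := hA.of_forall_exists_le_add hBA
    rcases A.eq_empty_or_nonempty with rfl | hA₀
    · have : B = ∅ := eq_empty_of_forall_notMem fun b hb => by
        obtain ⟨a, ha, -⟩ := hBA b hb
        exact ha
      simp [this, hε]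
    · obtain ⟨b, hb, -⟩ := hAB _ hA₀.some_mem
      rw [abs_sub_le_iff]
      exact ⟨by linarith [csSup_le_csSup_add hA₀ hB hAB],
        by linarith [csSup_le_csSup_add ⟨b, hb⟩ hA hBA]⟩
  · have hB : ¬BddAbove B := fun hB => hA (hB.of_forall_exists_le_add hAB)
    simp [Real.sSup_of_not_bddAbove hA, Real.sSup_of_not_bddAbove hB, hε]

section LipschitzWithGrowth

variable {E S : Type*} [NormedAddCommGroup E] [PseudoMetricSpace S]

def LipschitzWithGrowth (R : ℝ) (w : S → ℝ) (h : E → S → ℝ) : Prop :=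
  ∀ y y' p p', |h y p - h y' p'| ≤ R * (‖y - y'‖ + dist p p') * (1 + ‖y‖ + ‖y'‖ + w p + w p')

theorem LipschitzWithGrowth.sub_le {R : ℝ} {w : S → ℝ} {h : E → S → ℝ} {y y' : E} {p p' : S}
    {B W δ : ℝ} (hh : LipschitzWithGrowth R w h) (hR : 0 ≤ R) (hW : 0 ≤ W)
    (hδ : ‖y - y'‖ + dist p p' ≤ δ) (hy : ‖y‖ ≤ B) (hy' : ‖y'‖ ≤ B) (hp : w p ≤ W)
    (hp' : w p' ≤ W) : h y p - h y' p' ≤ R * δ * (1 + 2 * B + 2 * W) := by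
  calc h y p - h y' p'
      ≤ R * (‖y - y'‖ + dist p p') * (1 + ‖y‖ + ‖y'‖ + w p + w p') :=
        (le_abs_self _).trans (hh y y' p p')
    _ ≤ R * δ * (1 + 2 * B + 2 * W) := by
        rw [mul_assoc, mul_assoc]
        gcongr R * ?_
        exact mul_le_mul_of_nonneg hδ (by linarith) (by positivity)
          (by linarith [norm_nonneg y])

theorem payoff_sub_le {U : Type*} {μ μ' : ℝ → S} {v : ℝ → U} {x x' : ℝ → E} {s T : ℝ}
    {g : ℝ → E → S → U → ℝ} {σ : E → S → ℝ} {w : S → ℝ} {R W B Δ D : ℝ}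
    (hs : 0 ≤ s) (hsT : s ≤ T) (hR : 0 ≤ R) (hW : 0 ≤ W) (hσ : LipschitzWithGrowth R w σ)
    (hg : ∀ t ∈ Icc 0 T, ∀ u, LipschitzWithGrowth R w fun y p => g t y p u)
    (hw : ∀ t ∈ Icc 0 T, w (μ t) ≤ W) (hw' : ∀ t ∈ Icc 0 T, w (μ' t) ≤ W)
    (hD : ∀ t ∈ Icc 0 T, dist (μ t) (μ' t) ≤ D)
    (hxB : ∀ t ∈ Icc s T, ‖x t‖ ≤ B) (hx'B : ∀ t ∈ Icc s T, ‖x' t‖ ≤ B)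
    (hΔ : ∀ t ∈ Icc s T, ‖x t - x' t‖ ≤ Δ)
    (hgx : IntervalIntegrable (fun τ => g τ (x τ) (μ τ) (v τ)) volume s T)
    (hgx' : IntervalIntegrable (fun τ => g τ (x' τ) (μ' τ) (v τ)) volume s T) :
    σ (x T) (μ T) + (∫ τ in s..T, g τ (x τ) (μ τ) (v τ))
      - (σ (x' T) (μ' T) + ∫ τ in s..T, g τ (x' τ) (μ' τ) (v τ))
      ≤ R * (Δ + D) * (1 + 2 * B + 2 * W) * (1 + (T - s)) := by
  set L := R * (Δ + D) * (1 + 2 * B + 2 * W)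
  have hpt : ∀ t ∈ Icc s T, ∀ h : E → S → ℝ, LipschitzWithGrowth R w h →
      h (x t) (μ t) - h (x' t) (μ' t) ≤ L := fun t ht h hh =>
    have ht₀ : t ∈ Icc 0 T := ⟨hs.trans ht.1, ht.2⟩
    hh.sub_le hR hW (add_le_add (hΔ t ht) (hD t ht₀)) (hxB t ht) (hx'B t ht) (hw t ht₀) (hw' t ht₀)
  have hint : (∫ τ in s..T, g τ (x τ) (μ τ) (v τ)) - ∫ τ in s..T, g τ (x' τ) (μ' τ) (v τ)
      ≤ L * (T - s) := by
    rw [← intervalIntegral.integral_sub hgx hgx']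
    refine (intervalIntegral.integral_mono_on hsT (hgx.sub hgx') intervalIntegrable_const
      fun τ hτ => hpt τ hτ _ (hg τ ⟨hs.trans hτ.1, hτ.2⟩ (v τ))).trans_eq ?_
    rw [intervalIntegral.integral_const, smul_eq_mul, mul_comm]
  have hterm := hpt T ⟨hsT, le_rfl⟩ σ hσ
  linarith

end LipschitzWithGrowth

section Trajectory

variable {E S U : Type*} [NormedAddCommGroup E] [NormedSpace ℝ E]
  {f : ℝ → E → S → U → E} {μ μ' : ℝ → S} {v : ℝ → U} {x x' : ℝ → E} {s T : ℝ} {ξ : E}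

def IsTrajectory (f : ℝ → E → S → U → E) (μ : ℝ → S) (v : ℝ → U) (s T : ℝ) (ξ : E)
    (x : ℝ → E) : Prop :=
  IntervalIntegrable (fun τ => f τ (x τ) (μ τ) (v τ)) volume s T ∧
    ∀ t ∈ Icc s T, x t = ξ + ∫ τ in s..t, f τ (x τ) (μ τ) (v τ)

theorem IsTrajectory.norm_le {ς : S → ℝ} {M Cς : ℝ} (hx : IsTrajectory f μ v s T ξ x)
    (hs : 0 ≤ s) (hM : 0 ≤ M) (hCς : 0 ≤ Cς)
    (hf : ∀ t ∈ Icc 0 T, ∀ y p u, ‖f t y p u‖ ≤ M * (1 + ‖y‖ + ς p))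
    (hμ : ∀ t ∈ Icc 0 T, ς (μ t) ≤ Cς) :
    ∀ t ∈ Icc s T, ‖x t‖ ≤ (1 + M * (1 + Cς) * T) * exp (M * T) * (1 + ‖ξ‖) := by
  intro t ht
  have hT : 0 ≤ T := hs.trans (ht.1.trans ht.2)
  have hfx : ∀ τ ∈ Icc s T, ‖f τ (x τ) (μ τ) (v τ)‖ ≤ M * ‖x τ‖ + M * (1 + Cς) := by
    intro τ hτ
    have hτ₀ : τ ∈ Icc 0 T := ⟨hs.trans hτ.1, hτ.2⟩
    calc _ ≤ M * (1 + ‖x τ‖ + ς (μ τ)) := hf τ hτ₀ _ _ _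
      _ ≤ M * (1 + ‖x τ‖ + Cς) := by gcongr; exact hμ τ hτ₀
      _ = _ := by ring
  calc ‖x t‖ ≤ (‖ξ‖ + M * (1 + Cς) * (T - s)) * exp (M * (t - s)) :=
        norm_le_of_eq_add_integral hM (by positivity) hx.1 hx.2 hfx t ht
    _ ≤ (‖ξ‖ + M * (1 + Cς) * T) * exp (M * T) := by
        gcongr <;> linarith [ht.1, ht.2]
    _ ≤ (1 + M * (1 + Cς) * T) * exp (M * T) * (1 + ‖ξ‖) := by
        rw [mul_right_comm (1 + _) (exp _)]
        gcongr ?_ * _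
        nlinarith [norm_nonneg ξ, show 0 ≤ M * (1 + Cς) * T by positivity]

variable [PseudoMetricSpace S]

theorem IsTrajectory.norm_sub_le {K D : ℝ} (hx : IsTrajectory f μ v s T ξ x)
    (hx' : IsTrajectory f μ' v s T ξ x') (hs : 0 ≤ s) (hK : 0 ≤ K)
    (hf : ∀ t ∈ Icc 0 T, ∀ y y' p p' u, ‖f t y p u - f t y' p' u‖ ≤ K * (‖y - y'‖ + dist p p'))
    (hD : ∀ t ∈ Icc 0 T, dist (μ t) (μ' t) ≤ D) :
    ∀ t ∈ Icc s T, ‖x t - x' t‖ ≤ K * T * exp (K * T) * D := by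
  intro t ht
  have hsT : s ≤ T := ht.1.trans ht.2
  have hT : 0 ≤ T := hs.trans hsT
  have hD₀ : 0 ≤ D := dist_nonneg.trans (hD T ⟨hT, le_rfl⟩)
  have hdiff : ∀ u ∈ Icc s T, x u - x' u =
      0 + ∫ τ in s..u, (f τ (x τ) (μ τ) (v τ) - f τ (x' τ) (μ' τ) (v τ)) := by
    intro u hu
    have hsub := uIcc_subset_uIcc_left (a := s) (uIcc_of_le hsT ▸ hu)
    rw [hx.2 u hu, hx'.2 u hu,
      intervalIntegral.integral_sub (hx.1.mono_set hsub) (hx'.1.mono_set hsub)]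
    abel
  have hfx : ∀ τ ∈ Icc s T, ‖f τ (x τ) (μ τ) (v τ) - f τ (x' τ) (μ' τ) (v τ)‖ ≤
      K * ‖x τ - x' τ‖ + K * D := by
    intro τ hτ
    have hτ₀ : τ ∈ Icc 0 T := ⟨hs.trans hτ.1, hτ.2⟩
    calc _ ≤ K * (‖x τ - x' τ‖ + dist (μ τ) (μ' τ)) := hf τ hτ₀ _ _ _ _ _
      _ ≤ K * (‖x τ - x' τ‖ + D) := by gcongr; exact hD τ hτ₀
      _ = _ := by ring
  calc ‖x t - x' t‖ ≤ (‖(0 : E)‖ + K * D * (T - s)) * exp (K * (t - s)) :=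
        norm_le_of_eq_add_integral hK (by positivity) (hx.1.sub hx'.1) hdiff hfx t ht
    _ ≤ (K * D * T) * exp (K * T) := by
        rw [norm_zero, zero_add]
        gcongr <;> linarith [ht.1, ht.2]
    _ = K * T * exp (K * T) * D := by ring

variable [MeasurableSpace U]

/-- The value `V(s, ξ; μ)` is the supremum of this set. -/
def payoffSet (f : ℝ → E → S → U → E) (g : ℝ → E → S → U → ℝ) (σ : E → S → ℝ) (μ : ℝ → S)
    (s T : ℝ) (ξ : E) : Set ℝ :=
  {r : ℝ | ∃ (v : ℝ → U) (x : ℝ → E),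
    Measurable v ∧
    IntervalIntegrable (fun τ => f τ (x τ) (μ τ) (v τ)) volume s T ∧
    IntervalIntegrable (fun τ => g τ (x τ) (μ τ) (v τ)) volume s T ∧
    (∀ t ∈ Icc s T, x t = ξ + ∫ τ in s..t, f τ (x τ) (μ τ) (v τ)) ∧
    r = σ (x T) (μ T) + ∫ τ in s..T, g τ (x τ) (μ τ) (v τ)}

/-- The constant `c` in `R (Δ + D) (1 + 2B + 2W) (1 + T) ≤ c (1 + ‖ξ‖) D`, where `Δ = K T e^{KT} D`
bounds the distance of the two trajectories and `B = (1 + M (1 + Cς) T) e^{MT} (1 + ‖ξ‖)` their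
size. -/
noncomputable def stabilityConst (K M R T Cς W : ℝ) : ℝ :=
  R * (K * T * exp (K * T) + 1) * (1 + T) *
    (1 + 2 * ((1 + M * (1 + Cς) * T) * exp (M * T)) + 2 * W)

theorem stabilityConst_nonneg {K M R T Cς W : ℝ} (hK : 0 ≤ K) (hM : 0 ≤ M) (hR : 0 ≤ R)
    (hT : 0 ≤ T) (hCς : 0 ≤ Cς) (hW : 0 ≤ W) : 0 ≤ stabilityConst K M R T Cς W := by
  unfold stabilityConst
  positivity

theorem exists_mem_payoffSet_le_add {g : ℝ → E → S → U → ℝ} {σ : E → S → ℝ} {ς w : S → ℝ}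
    {K M R Cς W D : ℝ} (hs : s ∈ Icc 0 T) (hK : 0 ≤ K) (hM : 0 ≤ M) (hR : 0 ≤ R)
    (hCς : 0 ≤ Cς) (hW : 0 ≤ W)
    (hfK : ∀ t ∈ Icc 0 T, ∀ y y' p p' u, ‖f t y p u - f t y' p' u‖ ≤ K * (‖y - y'‖ + dist p p'))
    (hfM : ∀ t ∈ Icc 0 T, ∀ y p u, ‖f t y p u‖ ≤ M * (1 + ‖y‖ + ς p))
    (hσ : LipschitzWithGrowth R w σ)
    (hg : ∀ t ∈ Icc 0 T, ∀ u, LipschitzWithGrowth R w fun y p => g t y p u)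
    (hμ : ∀ t ∈ Icc 0 T, ς (μ t) ≤ Cς ∧ w (μ t) ≤ W)
    (hμ' : ∀ t ∈ Icc 0 T, ς (μ' t) ≤ Cς ∧ w (μ' t) ≤ W)
    (hD : ∀ t ∈ Icc 0 T, dist (μ t) (μ' t) ≤ D)
    (hex : ∀ v : ℝ → U, Measurable v → ∃ x' : ℝ → E,
      IntervalIntegrable (fun τ => f τ (x' τ) (μ' τ) (v τ)) volume s T ∧
      IntervalIntegrable (fun τ => g τ (x' τ) (μ' τ) (v τ)) volume s T ∧
      ∀ t ∈ Icc s T, x' t = ξ + ∫ τ in s..t, f τ (x' τ) (μ' τ) (v τ)) :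
    ∀ r ∈ payoffSet f g σ μ s T ξ, ∃ r' ∈ payoffSet f g σ μ' s T ξ,
      r ≤ r' + stabilityConst K M R T Cς W * (1 + ‖ξ‖) * D := by
  rintro r ⟨v, x, hv, hfx, hgx, hx, rfl⟩
  obtain ⟨x', hfx', hgx', hx'⟩ := hex v hv
  refine ⟨_, ⟨v, x', hv, hfx', hgx', hx', rfl⟩, ?_⟩
  have htraj : IsTrajectory f μ v s T ξ x := ⟨hfx, hx⟩
  have htraj' : IsTrajectory f μ' v s T ξ x' := ⟨hfx', hx'⟩
  have hT : 0 ≤ T := hs.1.trans hs.2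
  have hD₀ : 0 ≤ D := dist_nonneg.trans (hD T ⟨hT, le_rfl⟩)
  have hpay := payoff_sub_le hs.1 hs.2 hR hW hσ hg (fun t ht => (hμ t ht).2)
    (fun t ht => (hμ' t ht).2) hD (htraj.norm_le hs.1 hM hCς hfM fun t ht => (hμ t ht).1)
    (htraj'.norm_le hs.1 hM hCς hfM fun t ht => (hμ' t ht).1)
    (htraj.norm_sub_le htraj' hs.1 hK hfK hD) hgx hgx'
  set B₀ := (1 + M * (1 + Cς) * T) * exp (M * T)
  have hB₀ : 0 ≤ B₀ := by positivity
  have hbound : R * (K * T * exp (K * T) * D + D) * (1 + 2 * (B₀ * (1 + ‖ξ‖)) + 2 * W) *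
      (1 + (T - s)) ≤ stabilityConst K M R T Cς W * (1 + ‖ξ‖) * D := by
    calc _ = R * (K * T * exp (K * T) + 1) * (1 + (T - s)) *
          (1 + 2 * (B₀ * (1 + ‖ξ‖)) + 2 * W) * D := by ring
      _ ≤ R * (K * T * exp (K * T) + 1) * (1 + T) * ((1 + 2 * B₀ + 2 * W) * (1 + ‖ξ‖)) * D := by
          gcongr
          · linarith [hs.1]
          · nlinarith [norm_nonneg ξ]
      _ = stabilityConst K M R T Cς W * (1 + ‖ξ‖) * D := by unfold stabilityConst; ring
  linarith

end Trajectory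

theorem stmt_13_general (d : ℕ) (T K M R C₂ : ℝ) (hK : 0 < K) (hM : 0 < M)
    (hR : 0 < R) (κ : ℝ → ℝ)
    (hκ0 : ∀ r : ℝ, 0 ≤ r → 0 ≤ κ r)
    (hκmono : ∀ a b : ℝ, 0 ≤ a → a ≤ b → κ a ≤ κ b) :
    ∃ c : ℝ, ∀ (D : ℝ), 0 ≤ D →
      ∀ (S : Type) [MetricSpace S] (ς : S → ℝ) (U : Type) [MeasurableSpace U]
        (f : ℝ → EuclideanSpace ℝ (Fin d) → S → U → EuclideanSpace ℝ (Fin d))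
        (g : ℝ → EuclideanSpace ℝ (Fin d) → S → U → ℝ)
        (σ : EuclideanSpace ℝ (Fin d) → S → ℝ)
        (μ₁ μ₂ : ℝ → S),
        (∀ p : S, 0 ≤ ς p) →
        -- (A3)
        (∀ t ∈ Set.Icc (0:ℝ) T, ∀ x' x'' p' p'' uu,
          ‖f t x' p' uu - f t x'' p'' uu‖ ≤ K * (‖x' - x''‖ + dist p' p'')) →
        -- (A4)
        (∀ t ∈ Set.Icc (0:ℝ) T, ∀ x p uu,
          ‖f t x p uu‖ ≤ M * (1 + ‖x‖ + ς p) ∧ |g t x p uu| ≤ M * (1 + ‖x‖ + κ (ς p))) →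
        -- (A5) for σ
        (∀ (x' x'' : EuclideanSpace ℝ (Fin d)) (p' p'' : S),
          |σ x' p' - σ x'' p''| ≤ R * (‖x' - x''‖ + dist p' p'')
            * (1 + ‖x'‖ + ‖x''‖ + κ (ς p') + κ (ς p''))) →
        -- (A5) for g
        (∀ t ∈ Set.Icc (0:ℝ) T, ∀ (x' x'' : EuclideanSpace ℝ (Fin d)) (p' p'' : S) (uu : U),
          |g t x' p' uu - g t x'' p'' uu| ≤ R * (‖x' - x''‖ + dist p' p'')
            * (1 + ‖x'‖ + ‖x''‖ + κ (ς p') + κ (ς p''))) →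
        -- bounds on the flows
        (∀ t ∈ Set.Icc (0:ℝ) T, (ς (μ₁ t)) ^ 2 ≤ C₂ ∧ (ς (μ₂ t)) ^ 2 ≤ C₂ ∧
          dist (μ₁ t) (μ₂ t) ≤ D) →
        -- existence of the solutions x[·, μᵢ, s, ξ, v]
        (∀ μ ∈ ({μ₁, μ₂} : Set (ℝ → S)), ∀ (v : ℝ → U), Measurable v →
          ∀ s ∈ Set.Icc (0:ℝ) T, ∀ ξ : EuclideanSpace ℝ (Fin d),
          ∃ x : ℝ → EuclideanSpace ℝ (Fin d),
            IntervalIntegrable (fun τ => f τ (x τ) (μ τ) (v τ)) volume s T ∧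
            IntervalIntegrable (fun τ => g τ (x τ) (μ τ) (v τ)) volume s T ∧
            ∀ t ∈ Set.Icc s T, x t = ξ + ∫ τ in s..t, f τ (x τ) (μ τ) (v τ)) →
        ∀ s ∈ Set.Icc (0:ℝ) T, ∀ ξ : EuclideanSpace ℝ (Fin d),
          |sSup {r : ℝ | ∃ (v : ℝ → U) (x : ℝ → EuclideanSpace ℝ (Fin d)),
              Measurable v ∧
              IntervalIntegrable (fun τ => f τ (x τ) (μ₁ τ) (v τ)) volume s T ∧
              IntervalIntegrable (fun τ => g τ (x τ) (μ₁ τ) (v τ)) volume s T ∧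
              (∀ t ∈ Set.Icc s T, x t = ξ + ∫ τ in s..t, f τ (x τ) (μ₁ τ) (v τ)) ∧
              r = σ (x T) (μ₁ T) + ∫ τ in s..T, g τ (x τ) (μ₁ τ) (v τ)}
           - sSup {r : ℝ | ∃ (v : ℝ → U) (x : ℝ → EuclideanSpace ℝ (Fin d)),
              Measurable v ∧
              IntervalIntegrable (fun τ => f τ (x τ) (μ₂ τ) (v τ)) volume s T ∧
              IntervalIntegrable (fun τ => g τ (x τ) (μ₂ τ) (v τ)) volume s T ∧
              (∀ t ∈ Set.Icc s T, x t = ξ + ∫ τ in s..t, f τ (x τ) (μ₂ τ) (v τ)) ∧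
              r = σ (x T) (μ₂ T) + ∫ τ in s..T, g τ (x τ) (μ₂ τ) (v τ)}|
          ≤ c * (1 + ‖ξ‖) * D := by
  refine ⟨stabilityConst K M R T √C₂ (κ √C₂), fun D hD S _ ς U _ f g σ μ₁ μ₂ hς hA3 hA4 hA5σ hA5g
    hflow hex s hs ξ => ?_⟩
  have hκ₀ : 0 ≤ κ √C₂ := hκ0 _ (sqrt_nonneg _)
  have hflow_le : ∀ μ : ℝ → S, (∀ t ∈ Icc 0 T, ς (μ t) ^ 2 ≤ C₂) →
      ∀ t ∈ Icc 0 T, ς (μ t) ≤ √C₂ ∧ κ (ς (μ t)) ≤ κ √C₂ := fun μ h t ht =>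
    have hle := (le_abs_self _).trans (abs_le_sqrt (h t ht))
    ⟨hle, hκmono _ _ (hς _) hle⟩
  have hμ₁ := hflow_le μ₁ fun t ht => (hflow t ht).1
  have hμ₂ := hflow_le μ₂ fun t ht => (hflow t ht).2.1
  have hfM := fun t ht y p u => (hA4 t ht y p u).1
  have hg : ∀ t ∈ Icc 0 T, ∀ u, LipschitzWithGrowth R (fun p => κ (ς p)) fun y p => g t y p u :=
    fun t ht u y y' p p' => hA5g t ht y y' p p' u
  refine abs_sSup_sub_sSup_le_of_forall_exists_le_add (mul_nonneg (mul_nonneg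
    (stabilityConst_nonneg hK.le hM.le hR.le (hs.1.trans hs.2) (sqrt_nonneg _) hκ₀)
    (by positivity)) hD) ?_ ?_
  · exact exists_mem_payoffSet_le_add hs hK.le hM.le hR.le (sqrt_nonneg _) hκ₀ hA3 hfM hA5σ hg
      hμ₁ hμ₂ (fun t ht => (hflow t ht).2.2) (hex μ₂ (by simp) · · s hs ξ)
  · exact exists_mem_payoffSet_le_add hs hK.le hM.le hR.le (sqrt_nonneg _) hκ₀ hA3 hfM hA5σ hg
      hμ₂ hμ₁ (fun t ht => dist_comm (μ₂ t) (μ₁ t) ▸ (hflow t ht).2.2)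
      (hex μ₁ (by simp) · · s hs ξ)

/-- value-function stability (estimate (33) in the proof of Theorem 1 of
the paper).  The value `V(s,ξ;μ)` of the deterministic optimal control problem (the
supremum over measurable controls `v`, with `x[·,μ,s,ξ,v]` the solution of
`ẋ = f(t,x,μ[t],v(t))`, `x(s) = ξ`, of `σ(x(T),μ[T]) + ∫ₛᵀ g`) depends
Lipschitz-continuously on the flow `μ`: there is a constant `c` depending only on
`K, M, R, T, κ, C₂` with `|V(s,ξ;μ₁) − V(s,ξ;μ₂)| ≤ c(1+‖ξ‖)D` whenever
`dist(μ₁[t],μ₂[t]) ≤ D` for all `t`. -/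
theorem stmt_13 (d : ℕ) (T K M R C₂ : ℝ) (hT : 0 < T) (hK : 0 < K) (hM : 0 < M)
    (hR : 0 < R) (hC₂ : 0 < C₂) (κ : ℝ → ℝ)
    (hκ0 : ∀ r : ℝ, 0 ≤ r → 0 ≤ κ r)
    (hκmono : ∀ a b : ℝ, 0 ≤ a → a ≤ b → κ a ≤ κ b) :
    ∃ c : ℝ, ∀ (D : ℝ), 0 ≤ D →
      ∀ (S : Type) [MetricSpace S] (ς : S → ℝ) (U : Type) [MeasurableSpace U]
        (f : ℝ → EuclideanSpace ℝ (Fin d) → S → U → EuclideanSpace ℝ (Fin d))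
        (g : ℝ → EuclideanSpace ℝ (Fin d) → S → U → ℝ)
        (σ : EuclideanSpace ℝ (Fin d) → S → ℝ)
        (μ₁ μ₂ : ℝ → S),
        (∀ p : S, 0 ≤ ς p) →
        -- (A3)
        (∀ t ∈ Set.Icc (0:ℝ) T, ∀ x' x'' p' p'' uu,
          ‖f t x' p' uu - f t x'' p'' uu‖ ≤ K * (‖x' - x''‖ + dist p' p'')) →
        -- (A4)
        (∀ t ∈ Set.Icc (0:ℝ) T, ∀ x p uu,
          ‖f t x p uu‖ ≤ M * (1 + ‖x‖ + ς p) ∧ |g t x p uu| ≤ M * (1 + ‖x‖ + κ (ς p))) →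
        -- (A5) for σ
        (∀ (x' x'' : EuclideanSpace ℝ (Fin d)) (p' p'' : S),
          |σ x' p' - σ x'' p''| ≤ R * (‖x' - x''‖ + dist p' p'')
            * (1 + ‖x'‖ + ‖x''‖ + κ (ς p') + κ (ς p''))) →
        -- (A5) for g
        (∀ t ∈ Set.Icc (0:ℝ) T, ∀ (x' x'' : EuclideanSpace ℝ (Fin d)) (p' p'' : S) (uu : U),
          |g t x' p' uu - g t x'' p'' uu| ≤ R * (‖x' - x''‖ + dist p' p'')
            * (1 + ‖x'‖ + ‖x''‖ + κ (ς p') + κ (ς p''))) →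
        -- bounds on the flows
        (∀ t ∈ Set.Icc (0:ℝ) T, (ς (μ₁ t)) ^ 2 ≤ C₂ ∧ (ς (μ₂ t)) ^ 2 ≤ C₂ ∧
          dist (μ₁ t) (μ₂ t) ≤ D) →
        -- existence of the solutions x[·, μᵢ, s, ξ, v]
        (∀ μ ∈ ({μ₁, μ₂} : Set (ℝ → S)), ∀ (v : ℝ → U), Measurable v →
          ∀ s ∈ Set.Icc (0:ℝ) T, ∀ ξ : EuclideanSpace ℝ (Fin d),
          ∃ x : ℝ → EuclideanSpace ℝ (Fin d),
            IntervalIntegrable (fun τ => f τ (x τ) (μ τ) (v τ)) volume s T ∧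
            IntervalIntegrable (fun τ => g τ (x τ) (μ τ) (v τ)) volume s T ∧
            ∀ t ∈ Set.Icc s T, x t = ξ + ∫ τ in s..t, f τ (x τ) (μ τ) (v τ)) →
        ∀ s ∈ Set.Icc (0:ℝ) T, ∀ ξ : EuclideanSpace ℝ (Fin d),
          |sSup {r : ℝ | ∃ (v : ℝ → U) (x : ℝ → EuclideanSpace ℝ (Fin d)),
              Measurable v ∧
              IntervalIntegrable (fun τ => f τ (x τ) (μ₁ τ) (v τ)) volume s T ∧
              IntervalIntegrable (fun τ => g τ (x τ) (μ₁ τ) (v τ)) volume s T ∧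
              (∀ t ∈ Set.Icc s T, x t = ξ + ∫ τ in s..t, f τ (x τ) (μ₁ τ) (v τ)) ∧
              r = σ (x T) (μ₁ T) + ∫ τ in s..T, g τ (x τ) (μ₁ τ) (v τ)}
           - sSup {r : ℝ | ∃ (v : ℝ → U) (x : ℝ → EuclideanSpace ℝ (Fin d)),
              Measurable v ∧
              IntervalIntegrable (fun τ => f τ (x τ) (μ₂ τ) (v τ)) volume s T ∧
              IntervalIntegrable (fun τ => g τ (x τ) (μ₂ τ) (v τ)) volume s T ∧
              (∀ t ∈ Set.Icc s T, x t = ξ + ∫ τ in s..t, f τ (x τ) (μ₂ τ) (v τ)) ∧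
              r = σ (x T) (μ₂ T) + ∫ τ in s..T, g τ (x τ) (μ₂ τ) (v τ)}|
          ≤ c * (1 + ‖ξ‖) * D :=
  stmt_13_general d T K M R C₂ hK hM hR κ hκ0 hκmono
end
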